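/- arXiv:2009.10276 — 3 statements merged into one kernel-verified Lean document; each statement's English description precedes it below -/
import Mathlib

section
/- Let A₁, …, Aₙ be positive definite operators satisfying mI ≤ Aᵢ ≤ MI for constants 0 < m ≤ M, and let w₁, …, wₙ be positive weights summing to 1. Then ∑ᵢ wᵢAᵢ ≤ K·(∑ᵢ wᵢAᵢ⁻¹)⁻¹, where K = (M + m)²/(4Mm) is the Kantorovich constant. -/
/-!
The functional calculus turns scalar inequalities on the spectrum into operator inequalities.
On `[m, M]` we have `x + Mm/x ≤ M + m`, since the difference is `(M - x)(x - m)/x`; so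
`Aᵢ + Mm Aᵢ⁻¹ ≤ (M + m)I`, and averaging gives `∑ wᵢAᵢ ≤ (M + m)I - Mm T` with
`T = ∑ wᵢAᵢ⁻¹ ≥ M⁻¹I`. The AM-GM inequality `p - qx ≤ p²/(4qx)` for `x > 0`, applied to `T`,
bounds the right-hand side by `(M + m)²/(4Mm) · T⁻¹`.
-/

open ContinuousLinearMap in
/-- A positive definite (positive invertible) bounded operator on a Hilbert space. -/
def IsPosDef {H : Type*} [NormedAddCommGroup H] [InnerProductSpace ℂ H] [CompleteSpace H]
    (A : H →L[ℂ] H) : Prop := A.IsPositive ∧ IsUnit A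

/-- A positive probability vector. -/
def IsProbVec {n : ℕ} (w : Fin n → ℝ) : Prop := (∀ i, 0 < w i) ∧ ∑ i, w i = 1

/-- An ordered mean: a family of weighted means of positive definite operators satisfying
homogeneity, monotonicity, joint concavity and the arithmetic-`G`-harmonic mean inequalities
with respect to the Loewner order. -/
structure OrderedMean (H : Type*) [NormedAddCommGroup H] [InnerProductSpace ℂ H]
    [CompleteSpace H] where
  G : ∀ n : ℕ, (Fin n → ℝ) → (Fin n → (H →L[ℂ] H)) → (H →L[ℂ] H)
  posDef : ∀ n w A, IsProbVec w → (∀ i, IsPosDef (A i)) → IsPosDef (G n w A)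
  homog : ∀ n w A (a : ℝ), IsProbVec w → (∀ i, IsPosDef (A i)) → 0 < a →
    G n w (fun i => a • A i) = a • G n w A
  mono : ∀ n w A B, IsProbVec w → (∀ i, IsPosDef (A i)) → (∀ i, IsPosDef (B i)) →
    (∀ i, B i ≤ A i) → G n w B ≤ G n w A
  concave : ∀ n w A B (s : ℝ), IsProbVec w → (∀ i, IsPosDef (A i)) → (∀ i, IsPosDef (B i)) →
    0 ≤ s → s ≤ 1 →
    (1 - s) • G n w A + s • G n w B ≤ G n w (fun i => (1 - s) • A i + s • B i)
  harm_le : ∀ n w A, IsProbVec w → (∀ i, IsPosDef (A i)) →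
    Ring.inverse (∑ i, w i • Ring.inverse (A i)) ≤ G n w A
  le_arith : ∀ n w A, IsProbVec w → (∀ i, IsPosDef (A i)) →
    G n w A ≤ ∑ i, w i • A i

/-- The parameterized ordered mean `G^μ`. -/
noncomputable def OrderedMean.pMean {H : Type*} [NormedAddCommGroup H] [InnerProductSpace ℂ H]
    [CompleteSpace H] (G : OrderedMean H) (μ : ℝ) (n : ℕ) (w : Fin n → ℝ)
    (A : Fin n → (H →L[ℂ] H)) : H →L[ℂ] H :=
  if 0 ≤ μ then G.G n w (fun i => A i + μ • 1) - μ • 1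
  else Ring.inverse (G.G n w (fun i => Ring.inverse (A i) + (-μ) • 1) - (-μ) • 1)

/-- The constant `ρ_{M,m}(t)`. -/
noncomputable def rhoConst (M m t : ℝ) : ℝ :=
  if M / m ≤ t then (1 - t) * m
  else if t ≤ m / M then (1 - t) * M
  else M + m - 2 * Real.sqrt (t * M * m)

variable {H : Type*} [NormedAddCommGroup H] [InnerProductSpace ℂ H] [CompleteSpace H]

section WeightedSum

variable {E : Type*} [AddCommMonoid E] [PartialOrder E] [IsOrderedAddMonoid E] [Module ℝ E]
  [PosSMulMono ℝ E] {n : ℕ} {w : Fin n → ℝ}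

lemma IsProbVec.sum_smul_le (hw : IsProbVec w) {x : Fin n → E} {y : E} (h : ∀ i, x i ≤ y) :
    ∑ i, w i • x i ≤ y :=
  calc ∑ i, w i • x i ≤ ∑ i, w i • y :=
        Finset.sum_le_sum fun i _ => smul_le_smul_of_nonneg_left (h i) (hw.1 i).le
    _ = y := by rw [← Finset.sum_smul, hw.2, one_smul]

lemma IsProbVec.le_sum_smul (hw : IsProbVec w) {x : Fin n → E} {y : E} (h : ∀ i, y ≤ x i) :
    y ≤ ∑ i, w i • x i :=
  calc y = ∑ i, w i • y := by rw [← Finset.sum_smul, hw.2, one_smul]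
    _ ≤ ∑ i, w i • x i :=
        Finset.sum_le_sum fun i _ => smul_le_smul_of_nonneg_left (h i) (hw.1 i).le

end WeightedSum

section CStarAlgebra

open Ring

variable {A : Type*} [CStarAlgebra A] [PartialOrder A] [StarOrderedRing A]

lemma IsStrictlyPositive.continuousOn_inv_spectrum {a : A} (ha : IsStrictlyPositive a) :
    ContinuousOn (fun x : ℝ => x⁻¹) (spectrum ℝ a) :=
  continuousOn_inv₀.mono fun _ hx => (ha.spectrum_pos hx).ne'

lemma add_smul_ringInverse_le_algebraMap {a : A} {m M : ℝ} (hm : 0 < m)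
    (hma : algebraMap ℝ A m ≤ a) (haM : a ≤ algebraMap ℝ A M) :
    a + (M * m) • a⁻¹ʳ ≤ algebraMap ℝ A (M + m) := by
  have ha : IsStrictlyPositive a := (isStrictlyPositive_algebraMap hm).of_le hma
  have hinv := ha.continuousOn_inv_spectrum
  have hcfc : a + (M * m) • a⁻¹ʳ = cfc (fun x : ℝ => x + M * m * x⁻¹) a := by
    rw [cfc_add (a := a) (fun x => x) (fun x => M * m * x⁻¹) continuousOn_id
      (continuousOn_const.mul hinv), cfc_id' ℝ a, cfc_const_mul _ _ a hinv,
      cfc_ringInverse_id (R := ℝ) a ha.isUnit]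
  rw [hcfc]
  refine cfc_le_algebraMap _ _ a (fun x hx => ?_)
    (continuousOn_id.add (continuousOn_const.mul hinv))
  have hmx : m ≤ x := (algebraMap_le_iff_le_spectrum).1 hma x hx
  have hxM : x ≤ M := (le_algebraMap_iff_spectrum_le).1 haM x hx
  have hx0 : 0 < x := hm.trans_le hmx
  have hfactor : M + m - (x + M * m * x⁻¹) = (M - x) * (x - m) / x := by
    field_simp
    ring
  rw [← sub_nonneg, hfactor]
  exact div_nonneg (mul_nonneg (sub_nonneg.2 hxM) (sub_nonneg.2 hmx)) hx0.le

lemma algebraMap_inv_le_ringInverse {a : A} {M : ℝ} (ha : IsStrictlyPositive a)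
    (haM : a ≤ algebraMap ℝ A M) : algebraMap ℝ A M⁻¹ ≤ a⁻¹ʳ := by
  have hinv := ha.continuousOn_inv_spectrum
  rw [← cfc_ringInverse_id (R := ℝ) a ha.isUnit]
  exact algebraMap_le_cfc _ _ a (fun x hx =>
    inv_anti₀ (ha.spectrum_pos hx) ((le_algebraMap_iff_spectrum_le).1 haM x hx)) hinv

lemma algebraMap_sub_smul_le_smul_ringInverse {b : A} (hb : IsStrictlyPositive b) (p : ℝ)
    {q : ℝ} (hq : 0 < q) : algebraMap ℝ A p - q • b ≤ (p ^ 2 / (4 * q)) • b⁻¹ʳ := by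
  have hinv := hb.continuousOn_inv_spectrum
  have hlhs : algebraMap ℝ A p - q • b = cfc (fun x : ℝ => p - q * x) b := by
    rw [cfc_sub .., cfc_const p b, cfc_const_mul .., cfc_id' ℝ b]
  rw [hlhs, ← cfc_ringInverse_id (R := ℝ) b hb.isUnit, ← cfc_const_mul _ _ b hinv]
  refine cfc_mono (fun x hx => ?_) (by fun_prop) (continuousOn_const.mul hinv)
  have hx0 : 0 < x := hb.spectrum_pos hx
  have hsquare : p ^ 2 / (4 * q) * x⁻¹ - (p - q * x) = (2 * q * x - p) ^ 2 / (4 * q * x) := by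
    field_simp
    ring
  rw [← sub_nonneg, hsquare]
  positivity

end CStarAlgebra

theorem kantorovich_reverse_am_hm_general {n : ℕ} (w : Fin n → ℝ) (hw : IsProbVec w)
    (A : Fin n → (H →L[ℂ] H)) (m M : ℝ) (hm : 0 < m) (hmM : m ≤ M)
    (hbd : ∀ i, m • (1 : H →L[ℂ] H) ≤ A i ∧ A i ≤ M • (1 : H →L[ℂ] H)) :
    ∑ i, w i • A i ≤ ((M + m) ^ 2 / (4 * M * m)) • Ring.inverse (∑ i, w i • Ring.inverse (A i)) := by
  simp only [← Algebra.algebraMap_eq_smul_one] at hbd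
  have hM : 0 < M := hm.trans_le hmM
  set T := ∑ i, w i • Ring.inverse (A i)
  have hsum : ∑ i, w i • A i + (M * m) • T ≤ algebraMap ℝ _ (M + m) := by
    have h := hw.sum_smul_le fun i => add_smul_ringInverse_le_algebraMap hm (hbd i).1 (hbd i).2
    simpa only [smul_add, Finset.sum_add_distrib, T, Finset.smul_sum, smul_comm (w _)] using h
  have hT : IsStrictlyPositive T := (isStrictlyPositive_algebraMap (inv_pos.2 hM)).of_le <|
    hw.le_sum_smul fun i => algebraMap_inv_le_ringInverse
      ((isStrictlyPositive_algebraMap hm).of_le (hbd i).1) (hbd i).2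
  calc ∑ i, w i • A i ≤ algebraMap ℝ _ (M + m) - (M * m) • T := le_sub_iff_add_le.2 hsum
    _ ≤ ((M + m) ^ 2 / (4 * (M * m))) • Ring.inverse T :=
      algebraMap_sub_smul_le_smul_ringInverse hT _ (mul_pos hM hm)
    _ = _ := by rw [mul_assoc]

theorem kantorovich_reverse_am_hm {n : ℕ} (w : Fin n → ℝ) (hw : IsProbVec w)
    (A : Fin n → (H →L[ℂ] H)) (hA : ∀ i, IsPosDef (A i)) (m M : ℝ) (hm : 0 < m) (hmM : m ≤ M)
    (hbd : ∀ i, m • (1 : H →L[ℂ] H) ≤ A i ∧ A i ≤ M • (1 : H →L[ℂ] H)) :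
    ∑ i, w i • A i ≤ ((M + m) ^ 2 / (4 * M * m)) • Ring.inverse (∑ i, w i • Ring.inverse (A i)) :=
  kantorovich_reverse_am_hm_general w hw A m M hm hmM hbd
end

section
/- Let G be an ordered mean and let 𝔸 = [Aᵢⱼ] be an n×k array of positive definite operators with mI ≤ Aᵢⱼ ≤ MI for constants 0 < m ≤ M. Then for positive probability vectors ω ∈ Δₙ and λ ∈ Δₖ, Gₙ(ω; Gₖ(λ; 𝔸¹), …, Gₖ(λ; 𝔸ⁿ)) ≤ K·Gₖ(λ; Gₙ(ω; 𝔸₁), …, Gₙ(ω; 𝔸ₖ)), where K = (M + m)²/(4Mm), 𝔸ⁱ is the i-th row and 𝔸ⱼ is the j-th column of 𝔸. -/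
variable {H : Type*} [NormedAddCommGroup H] [InnerProductSpace ℂ H] [CompleteSpace H]

/-!
Both sides are compared with weighted means of the whole array. Bounding the inner and then the
outer mean by arithmetic means, the left side is at most `S = ∑ wᵢλⱼ Aᵢⱼ`. Dually, the harmonic
mean inequality gives `Gₙ(ω; 𝔸ⱼ)⁻¹ ≤ ∑ᵢ wᵢ Aᵢⱼ⁻¹`, and applied once more (the inverse being
order reversing) the right side is at least `K T⁻¹` with `T = ∑ wᵢλⱼ Aᵢⱼ⁻¹`. What remains is
the operator Kantorovich inequality `S ≤ K T⁻¹`: on the spectrum `x + Mm/x ≤ M + m`, since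
`(M - x)(x - m) ≥ 0`, so `S + Mm T ≤ M + m`; and expanding `(1 - cT) T⁻¹ (1 - cT) ≥ 0` with
`c = 2Mm/(M + m)` gives `M + m - Mm T ≤ K T⁻¹`.
-/

section CStarAlgebra

variable {A : Type*} [CStarAlgebra A] [PartialOrder A] [StarOrderedRing A]

theorem isStrictlyPositive_sum_smul {ι : Type*} [Fintype ι] {p : ι → ℝ} {a : ι → A}
    (hp : ∀ i, 0 < p i) (hsum : ∑ i, p i = 1) (ha : ∀ i, IsStrictlyPositive (a i)) :
    IsStrictlyPositive (∑ i, p i • a i) := by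
  classical
  obtain ⟨i, hi⟩ := Finset.nonempty_of_sum_ne_zero (hsum ▸ one_ne_zero)
  rw [← Finset.add_sum_erase _ _ hi]
  exact ((ha i).smul (hp i)).add_nonneg
    (Finset.sum_nonneg fun j _ => smul_nonneg (hp j).le (ha j).nonneg)

theorem add_smul_ringInverse_le {a : A} {m M : ℝ} (hm : 0 < m) (hma : m • 1 ≤ a)
    (haM : a ≤ M • 1) : a + (M * m) • Ring.inverse a ≤ (M + m) • 1 := by
  have ha : IsStrictlyPositive a := (isStrictlyPositive_one.smul hm).of_le hma
  rw [← Algebra.algebraMap_eq_smul_one] at hma haM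
  have hspec : ∀ x ∈ spectrum ℝ a, m ≤ x ∧ x ≤ M := fun x hx =>
    ⟨(algebraMap_le_iff_le_spectrum ha.isSelfAdjoint).mp hma x hx,
      (le_algebraMap_iff_spectrum_le ha.isSelfAdjoint).mp haM x hx⟩
  -- discharges the continuity side goals of `cfc_add` and `cfc_const_mul` below
  have hne : ∀ x ∈ spectrum ℝ a, x ≠ 0 := fun x hx => (hm.trans_le (hspec x hx).1).ne'
  have hcfc : a + (M * m) • Ring.inverse a = cfc (fun x : ℝ => x + M * m * x⁻¹) a := by
    rw [cfc_add .., cfc_const_mul .., cfc_id' .., ← cfc_ringInverse_id (R := ℝ) a ha.isUnit]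
  rw [hcfc, ← Algebra.algebraMap_eq_smul_one]
  refine cfc_le_algebraMap _ _ a fun x hx => ?_
  obtain ⟨hmx, hxM⟩ := hspec x hx
  have hx : 0 < x := hm.trans_le hmx
  rw [← sub_nonneg]
  have : M + m - (x + M * m * x⁻¹) = (M - x) * (x - m) / x := by field_simp; ring
  rw [this]
  exact div_nonneg (mul_nonneg (by linarith) (by linarith)) hx.le

theorem two_mul_smul_one_sub_sq_smul_le_ringInverse {t : A} (ht : IsStrictlyPositive t) (c : ℝ) :
    (2 * c) • 1 - c ^ 2 • t ≤ Ring.inverse t := by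
  have hconj : 0 ≤ star (1 - c • t) * Ring.inverse t * (1 - c • t) :=
    star_left_conjugate_nonneg ht.ringInverse.nonneg _
  have htu : t * Ring.inverse t = 1 := Ring.mul_inverse_cancel _ ht.isUnit
  have hut : Ring.inverse t * t = 1 := Ring.inverse_mul_cancel _ ht.isUnit
  have hexpand : star (1 - c • t) * Ring.inverse t * (1 - c • t)
      = Ring.inverse t - ((2 * c) • 1 - c ^ 2 • t) := by
    rw [star_sub, star_one, star_smul, ht.isSelfAdjoint.star_eq, star_trivial]
    simp only [sub_mul, mul_sub, smul_mul_assoc, mul_smul_comm, one_mul, mul_one, htu, hut]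
    module
  rwa [hexpand, sub_nonneg] at hconj

theorem sum_smul_le_smul_ringInverse_sum_smul_ringInverse {ι : Type*} [Fintype ι] {p : ι → ℝ}
    {a : ι → A} {m M : ℝ} (hm : 0 < m) (hmM : m ≤ M) (hp : ∀ i, 0 < p i)
    (hsum : ∑ i, p i = 1) (hma : ∀ i, m • 1 ≤ a i) (haM : ∀ i, a i ≤ M • 1) :
    ∑ i, p i • a i ≤
      ((M + m) ^ 2 / (4 * M * m)) • Ring.inverse (∑ i, p i • Ring.inverse (a i)) := by
  have hM : 0 < M := hm.trans_le hmM
  set T := ∑ i, p i • Ring.inverse (a i)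
  have hT : IsStrictlyPositive T := isStrictlyPositive_sum_smul hp hsum fun i =>
    ((isStrictlyPositive_one.smul hm).of_le (hma i)).ringInverse
  have harith : ∑ i, p i • a i ≤ (M + m) • 1 - (M * m) • T := by
    rw [le_sub_iff_add_le, Finset.smul_sum, ← Finset.sum_add_distrib]
    calc ∑ i, (p i • a i + (M * m) • p i • Ring.inverse (a i))
        = ∑ i, p i • (a i + (M * m) • Ring.inverse (a i)) := by
          simp only [smul_add, smul_comm (M * m) (p _)]
      _ ≤ ∑ i, p i • (M + m) • (1 : A) := Finset.sum_le_sum fun i _ =>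
          smul_le_smul_of_nonneg_left (add_smul_ringInverse_le hm (hma i) (haM i)) (hp i).le
      _ = (M + m) • 1 := by rw [← Finset.sum_smul, hsum, one_smul]
  set c := 2 * M * m / (M + m) with hc
  have hK : 0 ≤ (M + m) ^ 2 / (4 * M * m) := by positivity
  have hscale : (M + m) • (1 : A) - (M * m) • T
      = ((M + m) ^ 2 / (4 * M * m)) • ((2 * c) • 1 - c ^ 2 • T) := by
    rw [smul_sub, smul_smul, smul_smul]
    congr 2 <;> (rw [hc]; field_simp; ring)
  calc ∑ i, p i • a i ≤ (M + m) • 1 - (M * m) • T := harith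
    _ = _ := hscale
    _ ≤ _ := smul_le_smul_of_nonneg_left (two_mul_smul_one_sub_sq_smul_le_ringInverse hT c) hK

end CStarAlgebra

theorem isPosDef_iff_isStrictlyPositive {A : H →L[ℂ] H} : IsPosDef A ↔ IsStrictlyPositive A := by
  rw [IsStrictlyPositive.iff_of_unital, IsPosDef, ContinuousLinearMap.nonneg_iff_isPositive]

namespace OrderedMean

variable (G : OrderedMean H) {n : ℕ} {w : Fin n → ℝ}

theorem ringInverse_le_sum_smul_ringInverse {A : Fin n → (H →L[ℂ] H)} (hw : IsProbVec w)
    (hA : ∀ i, IsPosDef (A i)) : Ring.inverse (G.G n w A) ≤ ∑ i, w i • Ring.inverse (A i) := by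
  have hD : IsStrictlyPositive (∑ i, w i • Ring.inverse (A i)) := isStrictlyPositive_sum_smul
    hw.1 hw.2 fun i => (isPosDef_iff_isStrictlyPositive.mp (hA i)).ringInverse
  simpa only [Ring.inverse_inverse hD.isUnit] using
    CStarAlgebra.ringInverse_le_ringInverse (G.harm_le n w A hw hA) hD.ringInverse

theorem G_G_le_sum_smul_sum_smul {k : ℕ} {l : Fin k → ℝ} {A : Fin n → Fin k → (H →L[ℂ] H)}
    (hw : IsProbVec w) (hl : IsProbVec l) (hA : ∀ i j, IsPosDef (A i j)) :
    G.G n w (fun i => G.G k l (A i)) ≤ ∑ i, w i • ∑ j, l j • A i j := by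
  have hC : ∀ i, IsPosDef (∑ j, l j • A i j) := fun i => isPosDef_iff_isStrictlyPositive.mpr
    (isStrictlyPositive_sum_smul hl.1 hl.2 fun j => isPosDef_iff_isStrictlyPositive.mp (hA i j))
  calc G.G n w (fun i => G.G k l (A i)) ≤ G.G n w (fun i => ∑ j, l j • A i j) :=
        G.mono n w _ _ hw hC (fun i => G.posDef k l (A i) hl (hA i))
          (fun i => G.le_arith k l (A i) hl (hA i))
    _ ≤ ∑ i, w i • ∑ j, l j • A i j := G.le_arith n w _ hw hC

end OrderedMean

theorem mixture_kantorovich (G : OrderedMean H) {n k : ℕ} (w : Fin n → ℝ) (l : Fin k → ℝ)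
    (hw : IsProbVec w) (hl : IsProbVec l) (A : Fin n → Fin k → (H →L[ℂ] H))
    (hA : ∀ i j, IsPosDef (A i j)) (m M : ℝ) (hm : 0 < m) (hmM : m ≤ M)
    (hbd : ∀ i j, m • (1 : H →L[ℂ] H) ≤ A i j ∧ A i j ≤ M • (1 : H →L[ℂ] H)) :
    G.G n w (fun i => G.G k l (A i)) ≤
      ((M + m) ^ 2 / (4 * M * m)) • G.G k l (fun j => G.G n w (fun i => A i j)) := by
  have hK : 0 ≤ (M + m) ^ 2 / (4 * M * m) := by have := hm.trans_le hmM; positivity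
  have hB : ∀ j, IsStrictlyPositive (Ring.inverse (G.G n w fun i => A i j)) := fun j =>
    (isPosDef_iff_isStrictlyPositive.mp (G.posDef n w _ hw fun i => hA i j)).ringInverse
  calc G.G n w (fun i => G.G k l (A i)) ≤ ∑ i, w i • ∑ j, l j • A i j :=
        G.G_G_le_sum_smul_sum_smul hw hl hA
    _ = ∑ x : Fin n × Fin k, (w x.1 * l x.2) • A x.1 x.2 := by
        simp only [Fintype.sum_prod_type, Finset.smul_sum, mul_smul]
    _ ≤ ((M + m) ^ 2 / (4 * M * m)) •
          Ring.inverse (∑ x : Fin n × Fin k, (w x.1 * l x.2) • Ring.inverse (A x.1 x.2)) :=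
        sum_smul_le_smul_ringInverse_sum_smul_ringInverse hm hmM
          (fun x => mul_pos (hw.1 x.1) (hl.1 x.2))
          (by rw [Fintype.sum_prod_type, ← Finset.sum_mul_sum, hw.2, hl.2, one_mul])
          (fun x => (hbd x.1 x.2).1) (fun x => (hbd x.1 x.2).2)
    _ = ((M + m) ^ 2 / (4 * M * m)) •
          Ring.inverse (∑ j, l j • ∑ i, w i • Ring.inverse (A i j)) := by
        simp only [Fintype.sum_prod_type_right, Finset.smul_sum, smul_smul, mul_comm]
    _ ≤ ((M + m) ^ 2 / (4 * M * m)) •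
          Ring.inverse (∑ j, l j • Ring.inverse (G.G n w fun i => A i j)) := by
        refine smul_le_smul_of_nonneg_left (CStarAlgebra.ringInverse_le_ringInverse ?_
          (isStrictlyPositive_sum_smul hl.1 hl.2 hB)) hK
        exact Finset.sum_le_sum fun j _ => smul_le_smul_of_nonneg_left
          (G.ringInverse_le_sum_smul_ringInverse hw fun i => hA i j) (hl.1 j).le
    _ ≤ ((M + m) ^ 2 / (4 * M * m)) • G.G k l (fun j => G.G n w (fun i => A i j)) :=
        smul_le_smul_of_nonneg_left
          (G.harm_le k l _ hl fun j => G.posDef n w _ hw fun i => hA i j) hK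
end

section
/- Let G be an ordered mean with parameterized means G^μ, λ ∈ Δₖ a positive probability vector, and μ₁,…,μₖ > 0. For any p ≥ 1, writing 𝔐_p(λ; μ) = (∑ⱼ λⱼμⱼ^p)^{1/p}: G^{𝔐_p(λ; μ)}(ω; A) ≥ ∑ⱼ λⱼ·G^{μⱼ}(ω; A) for any probability vector ω and positive definite operators A = (A₁,…,Aₙ). -/
variable {H : Type*} [NormedAddCommGroup H] [InnerProductSpace ℂ H] [CompleteSpace H]

theorem isPosDef_one : IsPosDef (1 : H →L[ℂ] H) :=
  isPosDef_iff_isStrictlyPositive.2 isStrictlyPositive_one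

theorem IsPosDef.smul {A : H →L[ℂ] H} (hA : IsPosDef A) {c : ℝ} (hc : 0 < c) :
    IsPosDef (c • A) :=
  isPosDef_iff_isStrictlyPositive.2 ((isPosDef_iff_isStrictlyPositive.1 hA).smul hc)

theorem IsPosDef.add_smul_one {A : H →L[ℂ] H} (hA : IsPosDef A) {c : ℝ} (hc : 0 ≤ c) :
    IsPosDef (A + c • 1) :=
  isPosDef_iff_isStrictlyPositive.2
    ((isPosDef_iff_isStrictlyPositive.1 hA).add_nonneg (smul_nonneg hc zero_le_one))

namespace OrderedMean

variable (G : OrderedMean H) {n : ℕ} {w : Fin n → ℝ}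

theorem G_one (hw : IsProbVec w) : G.G n w (fun _ => 1) = 1 := by
  refine le_antisymm ?_ ?_
  · simpa only [← Finset.sum_smul, hw.2, one_smul] using
      G.le_arith n w (fun _ => 1) hw fun _ => isPosDef_one
  · simpa only [Ring.inverse_one, ← Finset.sum_smul, hw.2, one_smul] using
      G.harm_le n w (fun _ => 1) hw fun _ => isPosDef_one

theorem G_smul_one (hw : IsProbVec w) {c : ℝ} (hc : 0 < c) :
    G.G n w (fun _ => c • 1) = c • 1 := by
  rw [G.homog n w (fun _ => 1) c hw (fun _ => isPosDef_one) hc, G.G_one hw]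

/-- Write `B + c = ½ (2B) + ½ (2c)` and use concavity, homogeneity and `G(2c) = 2c`. -/
theorem add_smul_one_le (hw : IsProbVec w) {B : Fin n → (H →L[ℂ] H)}
    (hB : ∀ i, IsPosDef (B i)) {c : ℝ} (hc : 0 ≤ c) :
    G.G n w B + c • 1 ≤ G.G n w (fun i => B i + c • 1) := by
  rcases hc.eq_or_lt with rfl | hc
  · simp
  have hconc := G.concave n w (fun i => (2 : ℝ) • B i) (fun _ => (2 * c) • 1) (1 / 2) hw
    (fun i => (hB i).smul two_pos) (fun _ => isPosDef_one.smul (by positivity))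
    (by norm_num) (by norm_num)
  rw [G.homog n w B 2 hw hB two_pos, G.G_smul_one hw (by positivity)] at hconc
  convert hconc using 1
  · module
  · congr 1; funext i; module

theorem pMean_of_nonneg {μ : ℝ} (hμ : 0 ≤ μ) (A : Fin n → (H →L[ℂ] H)) :
    G.pMean μ n w A = G.G n w (fun i => A i + μ • 1) - μ • 1 :=
  if_pos hμ

variable {A : Fin n → (H →L[ℂ] H)}

theorem monotoneOn_pMean (hw : IsProbVec w) (hA : ∀ i, IsPosDef (A i)) :
    MonotoneOn (fun μ => G.pMean μ n w A) (Set.Ici 0) := by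
  intro x (hx : 0 ≤ x) y (hy : 0 ≤ y) hxy
  have key := G.add_smul_one_le hw (fun i => (hA i).add_smul_one hx) (sub_nonneg.2 hxy)
  simp only [add_assoc, ← add_smul, add_sub_cancel] at key
  simp only [G.pMean_of_nonneg hx, G.pMean_of_nonneg hy]
  calc G.G n w (fun i => A i + x • 1) - x • 1
      = G.G n w (fun i => A i + x • 1) + (y - x) • 1 - y • 1 := by module
    _ ≤ G.G n w (fun i => A i + y • 1) - y • 1 := sub_le_sub_right key _

theorem concaveOn_pMean (hw : IsProbVec w) (hA : ∀ i, IsPosDef (A i)) :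
    ConcaveOn ℝ (Set.Ici 0) (fun μ => G.pMean μ n w A) := by
  refine ⟨convex_Ici 0, fun x (hx : 0 ≤ x) y (hy : 0 ≤ y) a b ha hb hab => ?_⟩
  obtain rfl : a = 1 - b := eq_sub_of_add_eq hab
  have hconc := G.concave n w _ _ b hw (fun i => (hA i).add_smul_one hx)
    (fun i => (hA i).add_smul_one hy) hb (by linarith)
  simp only [G.pMean_of_nonneg hx, G.pMean_of_nonneg hy,
    G.pMean_of_nonneg (by positivity : 0 ≤ (1 - b) • x + b • y)]
  calc (1 - b) • (G.G n w (fun i => A i + x • 1) - x • 1)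
        + b • (G.G n w (fun i => A i + y • 1) - y • 1)
      = (1 - b) • G.G n w (fun i => A i + x • 1) + b • G.G n w (fun i => A i + y • 1)
        - ((1 - b) • x + b • y) • 1 := by module
    _ ≤ _ := by
      gcongr
      convert hconc using 3 with i
      module

end OrderedMean

theorem pMean_powerMean_param (G : OrderedMean H) {n k : ℕ} (w : Fin n → ℝ)
    (l : Fin k → ℝ) (hw : IsProbVec w) (hl : IsProbVec l)
    (A : Fin n → (H →L[ℂ] H)) (hA : ∀ i, IsPosDef (A i))
    (μ : Fin k → ℝ) (hμ : ∀ j, 0 < μ j) (p : ℝ) (hp : 1 ≤ p) :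
    ∑ j, l j • G.pMean (μ j) n w A ≤
      G.pMean ((∑ j, l j * μ j ^ p) ^ (1 / p)) n w A := by
  have hl₀ : ∀ j ∈ Finset.univ, 0 ≤ l j := fun j _ => (hl.1 j).le
  have hμ₀ : ∀ j ∈ Finset.univ, 0 ≤ μ j := fun j _ => (hμ j).le
  have hmean₀ : 0 ≤ ∑ j, l j * μ j :=
    Finset.sum_nonneg fun j hj => mul_nonneg (hl₀ j hj) (hμ₀ j hj)
  have power_mean : ∑ j, l j * μ j ≤ (∑ j, l j * μ j ^ p) ^ (1 / p) :=
    Real.arith_mean_le_rpow_mean _ l μ hl₀ hl.2 hμ₀ hp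
  calc ∑ j, l j • G.pMean (μ j) n w A
      ≤ G.pMean (∑ j, l j * μ j) n w A :=
        (G.concaveOn_pMean hw hA).le_map_sum hl₀ hl.2 hμ₀
    _ ≤ _ := G.monotoneOn_pMean hw hA hmean₀ (hmean₀.trans power_mean) power_mean
end
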